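/- arXiv:0808.2725 — 2 statements merged into one kernel-verified Lean document; each statement's English description precedes it below -/
import Mathlib

section
/- With the incremental subspaces N_E = L_E ∩ (Σ_{j∈E} L_{E∖{j}})^⊥ (for E ≠ ∅) and N_∅ = L_∅, if E and F are distinct subsets of [m], then N_E and N_F are orthogonal subspaces of Q^I. -/
open Finset

namespace Hier

variable {m : ℕ}

abbrev Cell (I : Fin m → ℕ) := ∀ j, Fin (I j)

variable (I : Fin m → ℕ)

/-- standard inner product on ℚ^I -/
def dot (x y : Cell I → ℚ) : ℚ := ∑ i, x i * y i

/-- L_E: tables depending only on the coordinates in E -/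
def LL (E : Finset (Fin m)) : Submodule ℚ (Cell I → ℚ) where
  carrier := {x | ∀ i i' : Cell I, (∀ j ∈ E, i j = i' j) → x i = x i'}
  zero_mem' := by intro i i' _; rfl
  add_mem' := by
    intro a b ha hb i i' h
    simp only [Pi.add_apply, ha i i' h, hb i i' h]
  smul_mem' := by
    intro c a ha i i' h
    simp only [Pi.smul_apply, ha i i' h]

/-- orthogonal complement w.r.t. the standard inner product -/
def perp (S : Submodule ℚ (Cell I → ℚ)) : Submodule ℚ (Cell I → ℚ) where
  carrier := {y | ∀ x ∈ S, dot I x y = 0}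
  zero_mem' := by intro x hx; simp [dot]
  add_mem' := by
    intro a b ha hb x hx
    have h1 := ha x hx
    have h2 := hb x hx
    simp only [dot, Pi.add_apply, mul_add, Finset.sum_add_distrib] at *
    rw [h1, h2]; ring
  smul_mem' := by
    intro c a ha x hx
    have h1 := ha x hx
    simp only [dot, Pi.smul_apply, smul_eq_mul] at *
    calc ∑ i, x i * (c * a i) = c * ∑ i, x i * a i := by
          rw [Finset.mul_sum]; congr 1; funext i; ring
      _ = 0 := by rw [h1]; ring

/-- incremental subspace N_E -/
def NN (E : Finset (Fin m)) : Submodule ℚ (Cell I → ℚ) :=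
  LL I E ⊓ perp I (⨆ j ∈ E, LL I (E.erase j))

/-- F-marginal of x evaluated at the marginal cell i_F -/
def marg (x : Cell I → ℚ) (F : Finset (Fin m)) (i : Cell I) : ℚ :=
  ∑ j : Cell I, if ∀ k ∈ F, j k = i k then x j else 0

/-- kernel of the configuration determined by a family of facets:
tables all of whose F-marginals vanish, F ∈ Fs -/
def kern (Fs : Finset (Finset (Fin m))) : Submodule ℚ (Cell I → ℚ) where
  carrier := {y | ∀ F ∈ Fs, ∀ i, marg I y F i = 0}
  zero_mem' := by intro F hF i; simp [marg]
  add_mem' := by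
    intro a b ha hb F hF i
    have h1 := ha F hF i
    have h2 := hb F hF i
    simp only [marg, Pi.add_apply] at *
    have key : (∑ j : Cell I, if ∀ k ∈ F, j k = i k then a j + b j else 0)
        = (∑ j : Cell I, if ∀ k ∈ F, j k = i k then a j else 0)
          + (∑ j : Cell I, if ∀ k ∈ F, j k = i k then b j else 0) := by
      rw [← Finset.sum_add_distrib]
      apply Finset.sum_congr rfl
      intro j _
      split <;> simp
    rw [key, h1, h2]; ring
  smul_mem' := by
    intro c a ha F hF i
    have h1 := ha F hF i
    simp only [marg, Pi.smul_apply, smul_eq_mul] at *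
    calc ∑ j : Cell I, (if ∀ k ∈ F, j k = i k then c * a j else 0)
        = c * ∑ j : Cell I, (if ∀ k ∈ F, j k = i k then a j else 0) := by
          rw [Finset.mul_sum]; congr 1; funext j; split <;> simp
      _ = 0 := by rw [h1]; ring

/-- a (finite) abstract simplicial complex on [m] -/
def IsComplex (Δ : Finset (Finset (Fin m))) : Prop :=
  ∀ F ∈ Δ, ∀ F' ⊆ F, F' ∈ Δ

/-- the maximal elements (facets) of Δ -/
def facets (Δ : Finset (Finset (Fin m))) : Finset (Finset (Fin m)) :=
  Δ.filter (fun D => ∀ F ∈ Δ, D ⊆ F → F = D)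

/-- row space of the hierarchical-model configuration A_Δ -/
def rowsp (Δ : Finset (Finset (Fin m))) : Submodule ℚ (Cell I → ℚ) :=
  ⨆ D ∈ facets Δ, LL I D

/-- single partial difference operator ∂_j -/
def pd1 (hI : ∀ j, 0 < I j) (j : Fin m) (x : Cell I → ℚ) : Cell I → ℚ :=
  fun i => x i - x (Function.update i j ⟨0, hI j⟩)

/-- ∂_E: composition of the (commuting) ∂_j, j ∈ E -/
noncomputable def pdE (hI : ∀ j, 0 < I j) (E : Finset (Fin m)) : (Cell I → ℚ) → (Cell I → ℚ) :=
  E.toList.foldr (fun j f => pd1 I hI j ∘ f) id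
lemma LL_mono {E F : Finset (Fin m)} (h : E ⊆ F) : LL I E ≤ LL I F :=
  fun _ hx i i' hii => hx i i' fun k hk => hii k (h hk)

lemma dot_comm (x y : Cell I → ℚ) : dot I x y = dot I y x :=
  Finset.sum_congr rfl fun _ _ => mul_comm _ _

def fiber (F : Finset (Fin m)) (a : Cell I) : Finset (Cell I) :=
  univ.filter fun i => ∀ k ∈ F, i k = a k

variable {I}

lemma mem_fiber {F : Finset (Fin m)} {a i : Cell I} : i ∈ fiber I F a ↔ ∀ k ∈ F, i k = a k := by
  simp [fiber]

lemma mem_fiber_comm {F : Finset (Fin m)} {a i : Cell I} : i ∈ fiber I F a ↔ a ∈ fiber I F i := by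
  simp only [mem_fiber]
  exact forall₂_congr fun _ _ => eq_comm

lemma marg_eq_sum_fiber (x : Cell I → ℚ) (F : Finset (Fin m)) (i : Cell I) :
    marg I x F i = ∑ j ∈ fiber I F i, x j := by
  rw [marg, fiber, Finset.sum_filter]

/-- Overwriting the `F`-coordinates by those of `b` is a bijection from the fiber of `a` onto
that of `b`. -/
lemma sum_fiber_piecewise {β : Type*} [AddCommMonoid β] (F : Finset (Fin m)) (a b : Cell I)
    (g : Cell I → β) : ∑ j ∈ fiber I F a, g (F.piecewise b j) = ∑ j ∈ fiber I F b, g j := by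
  have piecewise_of_mem {c j : Cell I} (hj : j ∈ fiber I F c) : F.piecewise c j = j := by
    funext k
    by_cases hk : k ∈ F
    · rw [piecewise_eq_of_mem _ _ _ hk, mem_fiber.1 hj k hk]
    · rw [piecewise_eq_of_notMem _ _ _ hk]
  have piecewise_mem (c j : Cell I) : F.piecewise c j ∈ fiber I F c :=
    mem_fiber.2 fun k hk => piecewise_eq_of_mem _ _ _ hk
  refine Finset.sum_nbij' (fun j => F.piecewise b j) (fun j => F.piecewise a j)
    (fun j _ => piecewise_mem b j) (fun j _ => piecewise_mem a j)
    (fun j hj => ?_) (fun j hj => ?_) (fun _ _ => rfl)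
  · rw [piecewise_idem_right, piecewise_of_mem hj]
  · rw [piecewise_idem_right, piecewise_of_mem hj]

lemma card_fiber_eq (F : Finset (Fin m)) (a b : Cell I) :
    (fiber I F a).card = (fiber I F b).card := by
  simpa only [Finset.card_eq_sum_ones] using sum_fiber_piecewise F a b fun _ => 1

lemma marg_mem_LL_inter {E : Finset (Fin m)} {x : Cell I → ℚ} (hx : x ∈ LL I E)
    (F : Finset (Fin m)) : marg I x F ∈ LL I (E ∩ F) := by
  intro i i' hii'
  rw [marg_eq_sum_fiber, marg_eq_sum_fiber, ← sum_fiber_piecewise F i i']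
  refine Finset.sum_congr rfl fun j hj => hx _ _ fun k hk => ?_
  by_cases hkF : k ∈ F
  · rw [piecewise_eq_of_mem _ _ _ hkF, mem_fiber.1 hj k hkF, hii' k (mem_inter.2 ⟨hk, hkF⟩)]
  · rw [piecewise_eq_of_notMem _ _ _ hkF]

lemma dot_marg {F : Finset (Fin m)} {y : Cell I → ℚ} (hy : y ∈ LL I F) (x : Cell I → ℚ)
    (a : Cell I) : dot I (marg I x F) y = (fiber I F a).card * dot I x y := by
  calc dot I (marg I x F) y
      = ∑ i, ∑ j ∈ fiber I F i, x j * y j := by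
        refine Finset.sum_congr rfl fun i _ => ?_
        rw [marg_eq_sum_fiber, Finset.sum_mul]
        exact Finset.sum_congr rfl fun j hj => by rw [hy j i (mem_fiber.1 hj)]
    _ = ∑ j, ∑ _i ∈ fiber I F j, x j * y j :=
        Finset.sum_comm' fun i j => by simp only [mem_univ, true_and, and_true, mem_fiber_comm]
    _ = (fiber I F a).card * dot I x y := by
        simp only [Finset.sum_const, nsmul_eq_mul, card_fiber_eq F _ a, dot, Finset.mul_sum]

/-- For `j ∈ F \ E`, the `F`-marginal of `x ∈ L_E` lies in `L_{F ∖ {j}}`, so it is orthogonal to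
`y ∈ N_F`; and since `y ∈ L_F`, its inner product with `y` is `⟨x, y⟩` times a fiber size. -/
lemma dot_eq_zero_of_mem_LL_of_mem_NN {E F : Finset (Fin m)} {j : Fin m} (hjF : j ∈ F)
    (hjE : j ∉ E) {x y : Cell I → ℚ} (hx : x ∈ LL I E) (hy : y ∈ NN I F) : dot I x y = 0 := by
  cases isEmpty_or_nonempty (Cell I) with
  | inl _ => simp [dot]
  | inr hne =>
    obtain ⟨a⟩ := hne
    have hsub : E ∩ F ⊆ F.erase j := fun k hk =>
      mem_erase.2 ⟨fun hkj => hjE (hkj ▸ (mem_inter.1 hk).1), (mem_inter.1 hk).2⟩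
    have hmarg : marg I x F ∈ ⨆ j ∈ F, LL I (F.erase j) :=
      (le_iSup₂ (f := fun j _ => LL I (F.erase j)) j hjF) (LL_mono I hsub (marg_mem_LL_inter hx F))
    have hcard : ((fiber I F a).card : ℚ) ≠ 0 :=
      Nat.cast_ne_zero.2 (Finset.card_pos.2 ⟨a, mem_fiber.2 fun _ _ => rfl⟩).ne'
    have hzero := hy.2 _ hmarg
    rw [dot_marg hy.1 x a] at hzero
    exact (mul_eq_zero.1 hzero).resolve_left hcard

theorem stmt5_general (E F : Finset (Fin m)) (hEF : E ≠ F) :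
    ∀ x ∈ NN I E, ∀ y ∈ NN I F, dot I x y = 0 := by
  intro x hx y hy
  by_cases hEsubF : E ⊆ F
  · obtain ⟨j, hjF, hjE⟩ := Finset.exists_of_ssubset (ssubset_of_subset_of_ne hEsubF hEF)
    exact dot_eq_zero_of_mem_LL_of_mem_NN hjF hjE hx.1 hy
  · obtain ⟨j, hjE, hjF⟩ := Finset.not_subset.1 hEsubF
    rw [dot_comm]
    exact dot_eq_zero_of_mem_LL_of_mem_NN hjE hjF hy.1 hx

/-- Lemma 2 (2): for distinct `E` and `F`, `N_E ⊥ N_F`. -/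
theorem stmt5 (hI : ∀ j, 2 ≤ I j) (E F : Finset (Fin m)) (hEF : E ≠ F) :
    ∀ x ∈ NN I E, ∀ y ∈ NN I F, dot I x y = 0 :=
  stmt5_general E F hEF

end Hier
end

section
/- Let Δ be a simplicial complex on [m] and P its pseudofactor poset. Then the intersection over the facets D of Δ of the wreath products S_{I_{D^C}} wr S_{I_D} (each viewed as a subgroup of the symmetric group on I) equals the generalized wreath product ∏_{ρ∈P} (S_{I_ρ})^{I_{A(ρ)}} indexed by P. -/
open Finset

namespace Hier

variable {m : ℕ}

variable (I : Fin m → ℕ)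

/-- `fst_Δ(i)`: the facets of `Δ` containing the factor `i`. -/
def fstD (Δ : Finset (Finset (Fin m))) (i : Fin m) : Finset (Finset (Fin m)) :=
  (facets Δ).filter (fun D => i ∈ D)

/-- `V(ρ)` for the pseudofactor class of `i`: the union of all classes `ρ' ≥ ρ`. -/
def Vp (Δ : Finset (Finset (Fin m))) (i : Fin m) : Finset (Fin m) :=
  Finset.univ.filter (fun j => fstD Δ i ⊆ fstD Δ j)

/-- the ancestor set `A(ρ)` of the pseudofactor class of `j`:
the union of the classes strictly above it. -/
def Ap (Δ : Finset (Finset (Fin m))) (j : Fin m) : Finset (Fin m) :=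
  Finset.univ.filter (fun k => fstD Δ j ⊂ fstD Δ k)

/-- Membership of a permutation `g` of the cells in the generalized wreath product
`∏_{ρ∈P} (S_{I_ρ})^{I_{A(ρ)}}` indexed by the pseudofactor poset `P`:
there is, for (each representative `j` of) each class `ρ`, a family `u j` of
permutations of the cells, depending only on the `A(ρ)`-coordinates of the argument,
fixing all coordinates outside `ρ` and acting on the `ρ`-coordinates through the
`ρ`-coordinates only (i.e. a family in `(S_{I_ρ})^{I_{A(ρ)}}`), such that `g` acts by
`(g i)_ρ = w_ρ(i_{A(ρ)}) i_ρ`. -/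
def InGWP (I : Fin m → ℕ) (Δ : Finset (Finset (Fin m))) (g : Equiv.Perm (Cell I)) : Prop :=
  ∃ u : Fin m → Cell I → Equiv.Perm (Cell I),
    (∀ j j' : Fin m, fstD Δ j = fstD Δ j' → u j = u j') ∧
    (∀ j : Fin m, ∀ i i' : Cell I, (∀ k ∈ Ap Δ j, i k = i' k) → u j i = u j i') ∧
    (∀ j : Fin m, ∀ i x : Cell I, ∀ k : Fin m, fstD Δ k ≠ fstD Δ j → u j i x k = x k) ∧
    (∀ j : Fin m, ∀ i x x' : Cell I, (∀ k, fstD Δ k = fstD Δ j → x k = x' k) →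
      ∀ k, fstD Δ k = fstD Δ j → u j i x k = u j i x' k) ∧
    (∀ i : Cell I, ∀ k : Fin m, g i k = u k i i k)

/-!
Intersecting the facet conditions shows that `g` acts on the coordinates in each
`V(ρ) = ⋂_{D ∈ fst(ρ)} D` through those coordinates only, and since `g` is a bijection of a finite
set, so is the induced map on `I_{V(ρ)}`. Freezing the coordinates outside `ρ` then gives
permutations `w_ρ(i)` of `I_ρ`; they depend on `i` only through `A(ρ)` because `A(ρ)` is again
a union of sets `V(ρ')`. Conversely, the `ρ`-component of an element of the generalized wreath
product reads only coordinates in `V(ρ)`, which lies in every facet containing `ρ`.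
-/

section Wreath

variable {ι : Type*} {α : ι → Type*}

/-- `g` lies in the wreath product `S_{α_{sᶜ}} wr S_{α_s}`. -/
def DescendsTo (g : (∀ i, α i) → ∀ i, α i) (s : Set ι) : Prop :=
  ∀ l ∈ s, DependsOn (fun x => g x l) s

theorem DependsOn.inter {β : Type*} {f : (∀ i, α i) → β} {s t : Set ι}
    (hs : DependsOn f s) (ht : DependsOn f t) : DependsOn f (s ∩ t) := by
  classical
  intro x y hxy
  calc f x = f (s.piecewise x y) := hs fun i hi => (Set.piecewise_eq_of_mem _ _ _ hi).symm
    _ = f y := ht fun i hi => by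
      by_cases his : i ∈ s
      · rw [Set.piecewise_eq_of_mem _ _ _ his]
        exact hxy i ⟨his, hi⟩
      · exact Set.piecewise_eq_of_notMem _ _ _ his

variable {g : (∀ i, α i) → ∀ i, α i} {r s t : Set ι}

theorem DescendsTo.inter (hs : DescendsTo g s) (ht : DescendsTo g t) :
    DescendsTo g (s ∩ t) :=
  fun l hl => DependsOn.inter (hs l hl.1) (ht l hl.2)

theorem descendsTo_univ (g : (∀ i, α i) → ∀ i, α i) : DescendsTo g Set.univ :=
  fun _ _ => dependsOn_univ _

theorem descendsTo_biInter {κ : Type*} (S : Finset κ) {u : κ → Set ι}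
    (h : ∀ D ∈ S, DescendsTo g (u D)) : DescendsTo g (⋂ D ∈ S, u D) := by
  classical
  induction S using Finset.induction_on with
  | empty => simpa using descendsTo_univ g
  | insert D S _ ih =>
    rw [Finset.set_biInter_insert]
    exact (h D (Finset.mem_insert_self D S)).inter
      (ih fun D' hD' => h D' (Finset.mem_insert_of_mem hD'))

/-- A wreath-product element induces a map on the `s`-coordinates; by finiteness this induced
map is injective because `g` is surjective. -/
theorem DescendsTo.eqOn_of_eqOn_apply [Finite ι] [∀ i, Finite (α i)] {g : Equiv.Perm (∀ i, α i)}
    (hg : DescendsTo g s) {x y : ∀ i, α i} (h : ∀ l ∈ s, g x l = g y l) :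
    ∀ l ∈ s, x l = y l := by
  classical
  let fill : (∀ l : s, α l) → ∀ l, α l := fun t l => if hl : l ∈ s then t ⟨l, hl⟩ else x l
  let F : (∀ l : s, α l) → ∀ l : s, α l := fun t => s.domRestrict (g (fill t))
  have hF : ∀ z, F (s.domRestrict z) = s.domRestrict (g z) := fun z =>
    funext fun l => hg l l.2 fun t ht => dif_pos ht
  have hfill : ∀ t, s.domRestrict (fill t) = t := fun t => funext fun l => dif_pos l.2
  have hsurj : Function.Surjective F := fun t =>
    ⟨s.domRestrict (g.symm (fill t)), by rw [hF, Equiv.apply_symm_apply, hfill]⟩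
  have hxy : s.domRestrict x = s.domRestrict y :=
    Finite.injective_iff_surjective.mpr hsurj <| by
      rw [hF, hF]
      exact funext fun l => h l l.2
  exact fun l hl => congrFun hxy ⟨l, hl⟩

/-- The component `w_r(i)` of `g` on the block `r`, the other coordinates frozen at `i`. -/
def blockMap (g : (∀ i, α i) → ∀ i, α i) (r : Set ι) [DecidablePred (· ∈ r)]
    (i x : ∀ j, α j) : ∀ j, α j :=
  r.piecewise (g (r.piecewise x i)) x

variable [DecidablePred (· ∈ r)] {i i' x x' : ∀ j, α j} {l : ι}

theorem blockMap_apply_of_mem (hl : l ∈ r) : blockMap g r i x l = g (r.piecewise x i) l :=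
  Set.piecewise_eq_of_mem _ _ _ hl

theorem blockMap_apply_of_notMem (hl : l ∉ r) : blockMap g r i x l = x l :=
  Set.piecewise_eq_of_notMem _ _ _ hl

theorem blockMap_self_apply (hl : l ∈ r) : blockMap g r x x l = g x l := by
  rw [blockMap_apply_of_mem hl, Set.piecewise_same]

theorem blockMap_apply_congr (h : ∀ k ∈ r, x k = x' k) (hl : l ∈ r) :
    blockMap g r i x l = blockMap g r i x' l := by
  rw [blockMap_apply_of_mem hl, blockMap_apply_of_mem hl]
  refine congrArg (fun z => g z l) (funext fun k => ?_)
  by_cases hk : k ∈ r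
  · simp only [Set.piecewise_eq_of_mem _ _ _ hk, h k hk]
  · simp only [Set.piecewise_eq_of_notMem _ _ _ hk]

theorem DescendsTo.blockMap_eq_of_eqOn (hg : DescendsTo g (r ∪ s)) (h : ∀ k ∈ s, i k = i' k) :
    blockMap g r i = blockMap g r i' := by
  funext x l
  by_cases hl : l ∈ r
  · rw [blockMap_apply_of_mem hl, blockMap_apply_of_mem hl]
    refine hg l (Or.inl hl) fun k hk => ?_
    by_cases hkr : k ∈ r
    · simp only [Set.piecewise_eq_of_mem _ _ _ hkr]
    · simp only [Set.piecewise_eq_of_notMem _ _ _ hkr]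
      exact h k (hk.resolve_left hkr)
  · rw [blockMap_apply_of_notMem hl, blockMap_apply_of_notMem hl]

theorem DescendsTo.blockMap_injective [Finite ι] [∀ i, Finite (α i)] {g : Equiv.Perm (∀ i, α i)}
    (hrs : Disjoint r s) (hg : DescendsTo g (r ∪ s)) (hs : DescendsTo g s) :
    Function.Injective (blockMap g r i) := by
  intro x x' hxx'
  have hout : ∀ k ∉ r, r.piecewise x i k = r.piecewise x' i k := fun k hk => by
    simp only [Set.piecewise_eq_of_notMem _ _ _ hk]
  have hg_eq : ∀ k ∈ r ∪ s, g (r.piecewise x i) k = g (r.piecewise x' i) k := by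
    rintro k (hk | hk)
    · simpa only [blockMap_apply_of_mem hk] using congrFun hxx' k
    · exact hs k hk fun t ht => hout t (Set.disjoint_right.mp hrs ht)
  funext k
  by_cases hk : k ∈ r
  · simpa only [Set.piecewise_eq_of_mem _ _ _ hk] using
      hg.eqOn_of_eqOn_apply hg_eq k (Or.inl hk)
  · simpa only [blockMap_apply_of_notMem hk] using congrFun hxx' k

end Wreath

section Pseudofactor

def pseudofactor (Δ : Finset (Finset (Fin m))) (j : Fin m) : Set (Fin m) :=
  {l | fstD Δ l = fstD Δ j}

variable {Δ : Finset (Finset (Fin m))}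

theorem mem_Vp {k l : Fin m} : l ∈ Vp Δ k ↔ fstD Δ k ⊆ fstD Δ l := by
  simp [Vp]

theorem coe_Vp (k : Fin m) : (Vp Δ k : Set (Fin m)) = ⋂ D ∈ fstD Δ k, (D : Set (Fin m)) := by
  ext l
  simp only [Finset.mem_coe, mem_Vp, Set.mem_iInter, Finset.subset_iff, fstD, Finset.mem_filter]
  exact ⟨fun h D hD => (h hD).2, fun h D hD => ⟨hD.1, h D hD⟩⟩

theorem Vp_subset_of_mem_facet {D : Finset (Fin m)} (hD : D ∈ facets Δ) {j : Fin m}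
    (hj : j ∈ D) : Vp Δ j ⊆ D := fun _ hl =>
  (Finset.mem_filter.mp (mem_Vp.mp hl (Finset.mem_filter.mpr ⟨hD, hj⟩))).2

variable {I} {g : Equiv.Perm (Cell I)}

/-- Every set of factors closed upwards in the pseudofactor order is a union of sets `V(ρ)`,
each an intersection of facets. -/
theorem descendsTo_of_upwardClosed (hg : ∀ D ∈ facets Δ, DescendsTo g (D : Set (Fin m)))
    {s : Set (Fin m)} (hs : ∀ l ∈ s, ∀ t, fstD Δ l ⊆ fstD Δ t → t ∈ s) : DescendsTo g s := by
  intro l hl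
  have hV : DescendsTo g (Vp Δ l : Set (Fin m)) := by
    rw [coe_Vp]
    exact descendsTo_biInter _ fun D hD => hg D (Finset.mem_filter.mp hD).1
  exact (hV l (mem_Vp.mpr subset_rfl)).mono fun t ht => hs l hl t (mem_Vp.mp ht)

theorem descendsTo_pseudofactor_union_Ap (hg : ∀ D ∈ facets Δ, DescendsTo g (D : Set (Fin m)))
    (j : Fin m) : DescendsTo g (pseudofactor Δ j ∪ Ap Δ j) := by
  refine descendsTo_of_upwardClosed hg fun l hl t hlt => ?_
  simp only [pseudofactor, Ap, Set.mem_union, Set.mem_ofPred_eq, Finset.coe_filter,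
    Finset.mem_univ, true_and] at hl ⊢
  by_cases hjt : fstD Δ j = fstD Δ t
  · exact Or.inl hjt.symm
  · rcases hl with hl | hl
    · exact Or.inr (Finset.ssubset_iff_subset_ne.mpr ⟨hl ▸ hlt, hjt⟩)
    · exact Or.inr (hl.trans_subset hlt)

theorem descendsTo_Ap (hg : ∀ D ∈ facets Δ, DescendsTo g (D : Set (Fin m))) (j : Fin m) :
    DescendsTo g (Ap Δ j : Set (Fin m)) :=
  descendsTo_of_upwardClosed hg fun l hl t hlt => by
    simp only [Ap, Finset.coe_filter, Finset.mem_univ, true_and, Set.mem_ofPred_eq] at hl ⊢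
    exact hl.trans_subset hlt

theorem disjoint_pseudofactor_Ap (j : Fin m) :
    Disjoint (pseudofactor Δ j) (Ap Δ j : Set (Fin m)) :=
  Set.disjoint_left.mpr fun l hl hl' => by
    simp only [pseudofactor, Set.mem_ofPred_eq, Ap, Finset.coe_filter, Finset.mem_univ,
      true_and] at hl hl'
    exact hl'.ne hl.symm

theorem inGWP_of_descendsTo (hg : ∀ D ∈ facets Δ, DescendsTo g (D : Set (Fin m))) :
    InGWP I Δ g := by
  classical
  refine ⟨fun j i => Equiv.ofBijective (blockMap g (pseudofactor Δ j) i)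
    (Finite.injective_iff_bijective.mp ((descendsTo_pseudofactor_union_Ap hg j).blockMap_injective
      (disjoint_pseudofactor_Ap j) (descendsTo_Ap hg j))), ?_, ?_, ?_, ?_, ?_⟩
  · intro j j' h
    funext i
    ext x l
    simp only [Equiv.ofBijective_apply, pseudofactor, h]
    congr
  · intro j i i' h
    ext x : 1
    exact congrFun ((descendsTo_pseudofactor_union_Ap hg j).blockMap_eq_of_eqOn h) x
  · exact fun j i x k hk => blockMap_apply_of_notMem hk
  · exact fun j i x x' h k hk => blockMap_apply_congr h hk
  · exact fun i k => (blockMap_self_apply (r := pseudofactor Δ k) rfl).symm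

theorem InGWP.descendsTo (hg : InGWP I Δ g) {D : Finset (Fin m)}
    (hD : D ∈ facets Δ) : DescendsTo g (D : Set (Fin m)) := by
  obtain ⟨u, -, hAp, -, hblock, hact⟩ := hg
  intro j hj i i' hii'
  have hV := Vp_subset_of_mem_facet hD hj
  calc g i j = u j i i j := hact i j
    _ = u j i' i j := by
      rw [hAp j i i' fun k hk => hii' k (hV (mem_Vp.mpr (Finset.mem_filter.mp hk).2.subset))]
    _ = u j i' i' j := hblock j i' i i' (fun k hk => hii' k (hV (mem_Vp.mpr hk.ge))) j rfl
    _ = g i' j := (hact i' j).symm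

end Pseudofactor

theorem stmt18 (Δ : Finset (Finset (Fin m))) (g : Equiv.Perm (Cell I)) :
    (∀ D ∈ facets Δ, ∀ i i' : Cell I,
        (∀ j ∈ D, i j = i' j) → ∀ j ∈ D, g i j = g i' j)
    ↔ InGWP I Δ g :=
  ⟨fun h => inGWP_of_descendsTo fun D hD j hj _ _ hii' => h D hD _ _ hii' j hj,
    fun h _ hD _ _ hii' j hj => h.descendsTo hD j hj hii'⟩

end Hier
end
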